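/- arXiv:1403.4291 — 5 statements merged into one kernel-verified Lean document; each statement's English description precedes it below -/
import Mathlib

section
/- Let d ≥ 1, let μ be a Borel probability measure on [0,1]^d with uniform marginals and diagonal δ(λ) = μ([0,λ]^d), and let ρ be a Borel probability measure on [0,1) (the law of the mixing variable Λ). Then, with all integrals taken in [0,∞], (1/d) ∫_{[0,1)} (1−λ)^{-1} dρ(λ) ≤ ∫_{[0,1)} (1−δ(λ))^{-1} dρ(λ) ≤ ∫_{[0,1)} (1−λ)^{-1} dρ(λ). The middle quantity is the expected number E[N_V] of draws from μ needed to produce one sample of the rejection-sampling proposal. -/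
/-!
The bounds are the Fréchet–Hoeffding bounds on the diagonal, `1 - d (1 - λ) ≤ δ(λ) ≤ λ`,
inverted and integrated. The upper bound `δ(λ) ≤ λ` holds because `[0,λ]^d` lies in the event
`u₀ ≤ λ`, of probability `λ`; the lower one is the union bound over the `d` events `u_i > λ`,
each of probability `1 - λ`.
-/

open MeasureTheory Set
open scoped ENNReal

section UniformMarginals

variable {ι : Type*}

def HasUniformMarginals (μ : Measure (ι → ℝ)) : Prop :=
  ∀ i, μ.map (fun u => u i) = volume.restrict (Icc (0 : ℝ) 1)

noncomputable def copulaDiagonal (μ : Measure (ι → ℝ)) (l : ℝ) : ℝ≥0∞ :=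
  μ (univ.pi fun _ => Icc 0 l)

namespace HasUniformMarginals

variable {μ : Measure (ι → ℝ)} (hμ : HasUniformMarginals μ)
include hμ

theorem measure_eval_preimage_Icc (i : ι) {l : ℝ} (hl : l ≤ 1) :
    μ ((fun u => u i) ⁻¹' Icc 0 l) = ENNReal.ofReal l := by
  rw [← Measure.map_apply (measurable_pi_apply i) measurableSet_Icc, hμ i,
    Measure.restrict_apply measurableSet_Icc,
    inter_eq_self_of_subset_left (Icc_subset_Icc le_rfl hl), Real.volume_Icc, sub_zero]

theorem copulaDiagonal_le [Nonempty ι] {l : ℝ} (hl : l ≤ 1) :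
    copulaDiagonal μ l ≤ ENNReal.ofReal l := by
  obtain ⟨i⟩ := ‹Nonempty ι›
  calc copulaDiagonal μ l ≤ μ ((fun u => u i) ⁻¹' Icc 0 l) :=
        measure_mono fun u hu => hu i (mem_univ i)
    _ = ENNReal.ofReal l := hμ.measure_eval_preimage_Icc i hl

theorem one_sub_copulaDiagonal_le [Fintype ι] [IsProbabilityMeasure μ] {l : ℝ}
    (hl : l ∈ Icc (0 : ℝ) 1) :
    1 - copulaDiagonal μ l ≤ Fintype.card ι * ENNReal.ofReal (1 - l) := by
  have hcompl_eval (i : ι) : μ ((fun u => u i) ⁻¹' Icc 0 l)ᶜ = ENNReal.ofReal (1 - l) := by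
    rw [prob_compl_eq_one_sub (measurable_pi_apply i measurableSet_Icc),
      hμ.measure_eval_preimage_Icc i hl.2, ENNReal.ofReal_sub _ hl.1, ENNReal.ofReal_one]
  have hcompl_subset : (univ.pi fun _ : ι => Icc (0 : ℝ) l)ᶜ ⊆
      ⋃ i, ((fun u : ι → ℝ => u i) ⁻¹' Icc 0 l)ᶜ := by
    intro u hu
    simp only [mem_compl_iff, mem_pi, mem_univ, true_implies, not_forall, mem_iUnion] at hu ⊢
    exact hu
  calc 1 - copulaDiagonal μ l = μ (univ.pi fun _ => Icc 0 l)ᶜ :=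
        (prob_compl_eq_one_sub (MeasurableSet.univ_pi fun _ => measurableSet_Icc)).symm
    _ ≤ ∑ i, μ ((fun u => u i) ⁻¹' Icc 0 l)ᶜ :=
        (measure_mono hcompl_subset).trans (measure_iUnion_fintype_le _ _)
    _ = Fintype.card ι * ENNReal.ofReal (1 - l) := by
        simp [hcompl_eval, Finset.sum_const]

theorem inv_one_sub_copulaDiagonal_le [Nonempty ι] {l : ℝ} (hl : l ∈ Icc (0 : ℝ) 1) :
    (1 - copulaDiagonal μ l)⁻¹ ≤ (ENNReal.ofReal (1 - l))⁻¹ := by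
  refine ENNReal.inv_le_inv' ?_
  calc ENNReal.ofReal (1 - l) = 1 - ENNReal.ofReal l := by
        rw [ENNReal.ofReal_sub _ hl.1, ENNReal.ofReal_one]
    _ ≤ 1 - copulaDiagonal μ l := tsub_le_tsub_left (hμ.copulaDiagonal_le hl.2) 1

theorem inv_card_mul_inv_le_inv_one_sub_copulaDiagonal [Fintype ι] [IsProbabilityMeasure μ]
    {l : ℝ} (hl : l ∈ Icc (0 : ℝ) 1) :
    (Fintype.card ι : ℝ≥0∞)⁻¹ * (ENNReal.ofReal (1 - l))⁻¹ ≤ (1 - copulaDiagonal μ l)⁻¹ := by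
  rw [← ENNReal.mul_inv (.inr ENNReal.ofReal_ne_top) (.inl (ENNReal.natCast_ne_top _))]
  exact ENNReal.inv_le_inv' (hμ.one_sub_copulaDiagonal_le hl)

end HasUniformMarginals

end UniformMarginals

theorem expected_waiting_time_bounds_general
    {d : ℕ} (hd : 1 ≤ d) (μ : Measure (Fin d → ℝ)) [IsProbabilityMeasure μ]
    (hmarg : ∀ i : Fin d, μ.map (fun u => u i) = volume.restrict (Set.Icc (0:ℝ) 1))
    (ρ : Measure ℝ) :
    (d : ℝ≥0∞)⁻¹ * ∫⁻ l in Set.Ico (0:ℝ) 1, (ENNReal.ofReal (1 - l))⁻¹ ∂ρ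
        ≤ ∫⁻ l in Set.Ico (0:ℝ) 1,
            (1 - μ (Set.pi Set.univ fun _ => Set.Icc (0:ℝ) l))⁻¹ ∂ρ ∧
    ∫⁻ l in Set.Ico (0:ℝ) 1,
        (1 - μ (Set.pi Set.univ fun _ => Set.Icc (0:ℝ) l))⁻¹ ∂ρ
      ≤ ∫⁻ l in Set.Ico (0:ℝ) 1, (ENNReal.ofReal (1 - l))⁻¹ ∂ρ := by
  have hμ : HasUniformMarginals μ := hmarg
  have : Nonempty (Fin d) := ⟨⟨0, hd⟩⟩
  constructor
  · refine (lintegral_const_mul_le _ _).trans (setLIntegral_mono' measurableSet_Ico fun l hl => ?_)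
    have h := hμ.inv_card_mul_inv_le_inv_one_sub_copulaDiagonal (Ico_subset_Icc_self hl)
    rwa [Fintype.card_fin] at h
  · exact setLIntegral_mono' measurableSet_Ico fun l hl =>
      hμ.inv_one_sub_copulaDiagonal_le (Ico_subset_Icc_self hl)

/-- Bounds on the expected number of draws of the rejection
sampling algorithm: if `μ` is a Borel probability measure on `[0,1]^d` (`d ≥ 1`)
with uniform marginals and diagonal `δ(λ) = μ([0,λ]^d)`, and `ρ` is a Borel
probability measure on `[0,1)`, then (with integrals valued in `[0,∞]`)
`(1/d) ∫ (1−λ)⁻¹ dρ ≤ ∫ (1−δ(λ))⁻¹ dρ ≤ ∫ (1−λ)⁻¹ dρ`. -/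
theorem expected_waiting_time_bounds
    {d : ℕ} (hd : 1 ≤ d) (μ : Measure (Fin d → ℝ)) [IsProbabilityMeasure μ]
    (hmarg : ∀ i : Fin d, μ.map (fun u => u i) = volume.restrict (Set.Icc (0:ℝ) 1))
    (ρ : Measure ℝ) [IsProbabilityMeasure ρ] (hρ : ρ (Set.Ico (0:ℝ) 1) = 1) :
    (d : ℝ≥0∞)⁻¹ * ∫⁻ l in Set.Ico (0:ℝ) 1, (ENNReal.ofReal (1 - l))⁻¹ ∂ρ
        ≤ ∫⁻ l in Set.Ico (0:ℝ) 1,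
            (1 - μ (Set.pi Set.univ fun _ => Set.Icc (0:ℝ) l))⁻¹ ∂ρ ∧
    ∫⁻ l in Set.Ico (0:ℝ) 1,
        (1 - μ (Set.pi Set.univ fun _ => Set.Icc (0:ℝ) l))⁻¹ ∂ρ
      ≤ ∫⁻ l in Set.Ico (0:ℝ) 1, (ENNReal.ofReal (1 - l))⁻¹ ∂ρ :=
  expected_waiting_time_bounds_general hd μ hmarg ρ
end

section
/- Let μ be a Borel probability measure on [0,1]^d and ρ a Borel probability measure on [0,1) such that μ([0,λ]^d) < 1 for ρ-almost every λ. Define the rejection-sampling proposal measure ν by ν(A) = ∫_{[0,1)} μ(A \ [0,λ]^d) / (1 − μ([0,λ]^d)) dρ(λ) for Borel sets A ⊆ [0,1]^d. Then ν equals μ with density g, i.e. ν(A) = ∫_A g dμ for all Borel A, where g(u) = ∫_{[0,1)} 1{λ < max_{1≤i≤d} u_i} / (1 − μ([0,λ]^d)) dρ(λ). Consequently μ is absolutely continuous with respect to ν on the set where g > 0, with Radon–Nikodym derivative w(u) = g(u)^{-1}. -/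
open MeasureTheory Set
open scoped ENNReal

/-!
With `c λ = (1 - μ [0,λ]^d)⁻¹`, the proposal is `ν A = ∫ c λ · μ (A \ [0,λ]^d) dρ(λ)`, and
Tonelli turns it into `∫_A (∫ c λ · 1{u ∉ [0,λ]^d} dρ(λ)) dμ(u)`. For `u` in the unit cube
(`μ`-almost every `u`), `u ∉ [0,λ]^d` exactly when `λ < max_i u_i`, so the inner integral is `g u`.
Moreover `ν univ ≤ ρ [0,1) < ∞`, the integrand being `x / x ≤ 1` in `ℝ≥0∞`, so `g` is `μ`-a.e. finite and `g⁻¹` undoes the density `g`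
wherever `g > 0`.
-/

section Density

variable {α β : Type*} [MeasurableSpace α] [MeasurableSpace β]

open Classical in
theorem lintegral_mul_measure_diff_eq_setLIntegral_lintegral {ρ : Measure α} {μ : Measure β}
    [SFinite ρ] [SFinite μ] {T : α → Set β} (hT : MeasurableSet {p : α × β | p.2 ∈ T p.1})
    {c : α → ℝ≥0∞} (hc : Measurable c) (A : Set β) :
    ∫⁻ l, c l * μ (A \ T l) ∂ρ = ∫⁻ u in A, ∫⁻ l, (if u ∈ T l then 0 else c l) ∂ρ ∂μ := by
  have hT_slice (l : α) : MeasurableSet (T l) := hT.preimage measurable_prodMk_left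
  have hslice (l : α) : c l * μ (A \ T l) = ∫⁻ u in A, (if u ∈ T l then 0 else c l) ∂μ := by
    calc c l * μ (A \ T l)
        = ∫⁻ u in A, (T l)ᶜ.indicator (fun _ => c l) u ∂μ := by
          rw [lintegral_indicator_const (hT_slice l).compl,
            Measure.restrict_apply (hT_slice l).compl, inter_comm, sdiff_eq]
      _ = ∫⁻ u in A, (if u ∈ T l then 0 else c l) ∂μ := by
          simp only [indicator, mem_compl_iff, ite_not]
  simp_rw [hslice]
  exact lintegral_lintegral_swap
    (Measurable.ite hT measurable_const (hc.comp measurable_fst)).aemeasurable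

theorem setLIntegral_inv_withDensity {μ : Measure β}
    {g : β → ℝ≥0∞} (hg : Measurable g) (hg_top : ∀ᵐ u ∂μ, g u ≠ ∞) {A : Set β}
    (hA : MeasurableSet A) (hA_pos : A ⊆ {u | 0 < g u}) :
    ∫⁻ u in A, (g u)⁻¹ ∂(μ.withDensity g) = μ A := by
  have hg_ne_zero : ∀ᵐ u ∂μ.restrict A, g u ≠ 0 :=
    (ae_restrict_mem hA).mono fun u hu => (hA_pos hu).ne'
  calc ∫⁻ u in A, (g u)⁻¹ ∂(μ.withDensity g)
      = ((μ.restrict A).withDensity g).withDensity (fun u => (g u)⁻¹) univ := by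
        rw [withDensity_apply _ MeasurableSet.univ, Measure.restrict_univ, restrict_withDensity hA]
    _ = μ A := by
        rw [withDensity_inv_same hg hg_ne_zero (ae_restrict_of_ae hg_top),
          Measure.restrict_apply_univ]

end Density

section Cube

variable {ι : Type*}

theorem mem_pi_Icc_zero_iff_iSup_le [Finite ι] {u : ι → ℝ} (hu : ∀ i, 0 ≤ u i) {l : ℝ}
    (hl : 0 ≤ l) : u ∈ pi univ (fun _ => Icc 0 l) ↔ ⨆ i, u i ≤ l := by
  simp only [mem_pi, mem_univ, mem_Icc, hu, true_and, forall_const]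
  exact ⟨fun h => Real.iSup_le h hl,
    fun h i => (le_ciSup (finite_range u).bddAbove i).trans h⟩

theorem measurableSet_setOf_mem_pi_Icc_zero [Countable ι] :
    MeasurableSet {p : ℝ × (ι → ℝ) | p.2 ∈ pi univ fun _ => Icc 0 p.1} := by
  simp only [mem_pi, mem_univ, mem_Icc, forall_const, ofPred_forall, ofPred_and]
  exact MeasurableSet.iInter fun i =>
    (measurableSet_le measurable_const (by fun_prop)).inter
      (measurableSet_le (by fun_prop) measurable_fst)

theorem measurable_measure_pi_Icc_zero [MeasurableSpace (ι → ℝ)] (μ : Measure (ι → ℝ)) :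
    Measurable fun l : ℝ => μ (pi univ fun _ => Icc 0 l) :=
  Monotone.measurable fun _ _ hab =>
    measure_mono (pi_mono fun _ _ => Icc_subset_Icc le_rfl hab)

theorem measurable_lintegral_ite_lt_iSup [Countable ι] {ρ : Measure ℝ} [SFinite ρ]
    {c : ℝ → ℝ≥0∞} (hc : Measurable c) :
    Measurable fun u : ι → ℝ => ∫⁻ l, (if l < ⨆ i, u i then c l else 0) ∂ρ := by
  refine Measurable.lintegral_prod_right
    (f := fun (u : ι → ℝ) (l : ℝ) => if l < ⨆ i, u i then c l else 0) ?_
  have hsup : Measurable fun p : (ι → ℝ) × ℝ => ⨆ i, p.1 i :=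
    Measurable.iSup fun i => (measurable_pi_apply i).comp measurable_fst
  exact Measurable.ite (measurableSet_lt measurable_snd hsup) (hc.comp measurable_snd)
    measurable_const

end Cube

theorem rejection_proposal_density_general
    {d : ℕ} (μ : Measure (Fin d → ℝ)) [IsProbabilityMeasure μ]
    (hμcube : μ (Set.pi Set.univ fun _ => Set.Icc (0:ℝ) 1) = 1)
    (ρ : Measure ℝ) [IsProbabilityMeasure ρ]
    (g : (Fin d → ℝ) → ℝ≥0∞)
    (hg : ∀ u, g u = ∫⁻ l in Set.Ico (0:ℝ) 1,
        (if l < ⨆ i, u i then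
          (1 - μ (Set.pi Set.univ fun _ => Set.Icc (0:ℝ) l))⁻¹ else 0) ∂ρ) :
    (∀ A : Set (Fin d → ℝ), MeasurableSet A →
      ∫⁻ l in Set.Ico (0:ℝ) 1,
          μ (A \ Set.pi Set.univ fun _ => Set.Icc (0:ℝ) l)
            / (1 - μ (Set.pi Set.univ fun _ => Set.Icc (0:ℝ) l)) ∂ρ
        = ∫⁻ u in A, g u ∂μ) ∧
    (∀ A : Set (Fin d → ℝ), MeasurableSet A → A ⊆ {u | 0 < g u} →
      ∫⁻ u in A, (g u)⁻¹ ∂(μ.withDensity g) = μ A) := by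
  set C : ℝ → Set (Fin d → ℝ) := fun l => pi univ fun _ => Icc 0 l
  have hc : Measurable fun l => (1 - μ (C l))⁻¹ :=
    (measurable_const.sub (measurable_measure_pi_Icc_zero μ)).inv
  have hC (l : ℝ) : MeasurableSet (C l) := MeasurableSet.univ_pi fun _ => measurableSet_Icc
  have hcube : ∀ᵐ u ∂μ, u ∈ C 1 := (mem_ae_iff_prob_eq_one (hC 1)).mpr hμcube
  have hν (A : Set (Fin d → ℝ)) (_ : MeasurableSet A) :
      ∫⁻ l in Ico 0 1, μ (A \ C l) / (1 - μ (C l)) ∂ρ = ∫⁻ u in A, g u ∂μ := by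
    simp_rw [ENNReal.div_eq_inv_mul]
    refine (lintegral_mul_measure_diff_eq_setLIntegral_lintegral
      measurableSet_setOf_mem_pi_Icc_zero hc A).trans (lintegral_congr_ae ?_)
    filter_upwards [ae_restrict_of_ae hcube] with u hu
    rw [hg u]
    refine setLIntegral_congr_fun measurableSet_Ico fun l hl => ?_
    rw [mem_pi_Icc_zero_iff_iSup_le (fun i => (hu i (mem_univ i)).1) hl.1]
    simp only [C, ← not_lt, ite_not]
  have hg_meas : Measurable g := funext hg ▸ measurable_lintegral_ite_lt_iSup hc
  have hg_int : ∫⁻ u, g u ∂μ ≠ ∞ := by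
    rw [← Measure.restrict_univ (μ := μ), ← hν univ MeasurableSet.univ]
    refine ne_top_of_le_ne_top (measure_ne_top (ρ.restrict (Ico 0 1)) univ) ?_
    refine (lintegral_mono fun l => ?_).trans_eq lintegral_one
    rw [← compl_eq_univ_sdiff, prob_compl_eq_one_sub (hC l)]
    exact ENNReal.div_self_le_one
  exact ⟨hν, fun A hA hA_pos => setLIntegral_inv_withDensity hg_meas
    ((ae_lt_top hg_meas hg_int).mono fun _ => ne_of_lt) hA hA_pos⟩

/-- The rejection-sampling proposal measure
`ν(A) = ∫ μ(A \ [0,λ]^d)/(1 − μ([0,λ]^d)) dρ(λ)` has density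
`g(u) = ∫ 1{λ < max_i u_i}/(1 − μ([0,λ]^d)) dρ(λ)` with respect to `μ`, i.e.
`ν(A) = ∫_A g dμ` for all Borel `A`; consequently `μ` is absolutely continuous
with respect to `ν` on `{g > 0}` with Radon–Nikodym derivative `w = g⁻¹`, i.e.
`∫_A g⁻¹ dν = μ(A)` for all Borel `A ⊆ {g > 0}`. -/
theorem rejection_proposal_density
    {d : ℕ} [NeZero d] (μ : Measure (Fin d → ℝ)) [IsProbabilityMeasure μ]
    (hμcube : μ (Set.pi Set.univ fun _ => Set.Icc (0:ℝ) 1) = 1)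
    (ρ : Measure ℝ) [IsProbabilityMeasure ρ] (hρ : ρ (Set.Ico (0:ℝ) 1) = 1)
    (hlt : ∀ᵐ l ∂ρ, μ (Set.pi Set.univ fun _ => Set.Icc (0:ℝ) l) < 1)
    (g : (Fin d → ℝ) → ℝ≥0∞)
    (hg : ∀ u, g u = ∫⁻ l in Set.Ico (0:ℝ) 1,
        (if l < ⨆ i, u i then
          (1 - μ (Set.pi Set.univ fun _ => Set.Icc (0:ℝ) l))⁻¹ else 0) ∂ρ) :
    (∀ A : Set (Fin d → ℝ), MeasurableSet A →
      ∫⁻ l in Set.Ico (0:ℝ) 1,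
          μ (A \ Set.pi Set.univ fun _ => Set.Icc (0:ℝ) l)
            / (1 - μ (Set.pi Set.univ fun _ => Set.Icc (0:ℝ) l)) ∂ρ
        = ∫⁻ u in A, g u ∂μ) ∧
    (∀ A : Set (Fin d → ℝ), MeasurableSet A → A ⊆ {u | 0 < g u} →
      ∫⁻ u in A, (g u)⁻¹ ∂(μ.withDensity g) = μ A) :=
  rejection_proposal_density_general μ hμcube ρ g hg
end

section
/- Let α ≥ 1, β > 1 and γ ∈ [0,1). Let ρ be the measure on [0,1) given by ρ = (1−γ)·δ_0 + the measure with Lebesgue density λ ↦ γ·β·α·λ^{α−1}(1−λ^α)^{β−1} on (0,1), where δ_0 is the Dirac measure at 0. Then ρ is a probability measure, and for every t ∈ [0,1], ∫_{[0,t]} (1−λ^α)^{-1} dρ(λ) = (β − 1 + γ(1 − β(1−t^α)^{β−1})) / (β − 1); in particular, for t = 1 this value equals 1 + γ/(β−1). -/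
/-! The absolutely continuous part of `ρ` is `γ` times the Kumaraswamy `(α, β)` distribution,
whose density `αβ x^(α-1) (1 - x^α)^(β-1)` has the explicit primitive `1 - (1 - x^α)^β`.
Dividing this density by `1 - x^α` gives `β / (β - 1)` times the Kumaraswamy `(α, β - 1)`
density, so the weight integral is `(1 - γ) + γ β / (β - 1) · (1 - (1 - t^α)^(β-1))`. -/

open MeasureTheory Set

noncomputable section

def kumaraswamyPDF (a b x : ℝ) : ℝ := a * b * x ^ (a - 1) * (1 - x ^ a) ^ (b - 1)

def kumaraswamyCDF (a b x : ℝ) : ℝ := 1 - (1 - x ^ a) ^ b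

def kumaraswamyMeasure (a b : ℝ) : Measure ℝ :=
  (volume.restrict (Ioo 0 1)).withDensity fun x => ENNReal.ofReal (kumaraswamyPDF a b x)

-- The law with distribution function `F_Λ = (1 - γ) + γ · kumaraswamyCDF a b` on `[0, 1]`.
def kumaraswamyMixture (γ a b : ℝ) : Measure ℝ :=
  ENNReal.ofReal (1 - γ) • Measure.dirac 0 + ENNReal.ofReal γ • kumaraswamyMeasure a b

end

section Kumaraswamy

variable {a b x t : ℝ}

lemma one_sub_rpow_pos (ha : 0 < a) (hx : x ∈ Ioo (0 : ℝ) 1) : 0 < 1 - x ^ a :=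
  sub_pos.2 (Real.rpow_lt_one hx.1.le hx.2 ha)

lemma kumaraswamyPDF_nonneg (ha : 0 < a) (hb : 0 < b) (hx : x ∈ Ioo (0 : ℝ) 1) :
    0 ≤ kumaraswamyPDF a b x := by
  have hx0 := hx.1
  have hx1 := one_sub_rpow_pos ha hx
  unfold kumaraswamyPDF
  positivity

lemma hasDerivAt_kumaraswamyCDF (ha : 0 < a) (hx : x ∈ Ioo (0 : ℝ) 1) :
    HasDerivAt (kumaraswamyCDF a b) (kumaraswamyPDF a b x) x := by
  have hpow : HasDerivAt (fun x => x ^ a) (a * x ^ (a - 1)) x :=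
    Real.hasDerivAt_rpow_const (Or.inl hx.1.ne')
  have hcdf := ((hpow.const_sub 1).rpow_const (p := b)
    (Or.inl (one_sub_rpow_pos ha hx).ne')).const_sub 1
  refine hcdf.congr_deriv ?_
  unfold kumaraswamyPDF
  ring

lemma continuous_kumaraswamyCDF (ha : 0 < a) (hb : 0 < b) : Continuous (kumaraswamyCDF a b) := by
  unfold kumaraswamyCDF
  have hcont (p : ℝ) (hp : 0 < p) : Continuous fun x : ℝ => x ^ p :=
    continuous_iff_continuousAt.2 fun x => Real.continuousAt_rpow_const x p (Or.inr hp.le)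
  exact continuous_const.sub ((hcont b hb).comp (continuous_const.sub (hcont a ha)))

lemma kumaraswamyCDF_zero (ha : 0 < a) : kumaraswamyCDF a b 0 = 0 := by
  simp [kumaraswamyCDF, Real.zero_rpow ha.ne', Real.one_rpow]

lemma kumaraswamyCDF_one (hb : 0 < b) : kumaraswamyCDF a b 1 = 1 := by
  simp [kumaraswamyCDF, Real.zero_rpow hb.ne']

lemma integrableOn_kumaraswamyPDF (ha : 0 < a) (hb : 0 < b) :
    IntegrableOn (kumaraswamyPDF a b) (Ioc 0 1) :=
  intervalIntegral.integrableOn_deriv_of_nonneg (continuous_kumaraswamyCDF ha hb).continuousOn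
    (fun _ hx => hasDerivAt_kumaraswamyCDF ha hx) (fun _ hx => kumaraswamyPDF_nonneg ha hb hx)

lemma integral_kumaraswamyPDF (ha : 0 < a) (hb : 0 < b) (ht : t ∈ Icc (0 : ℝ) 1) :
    ∫ x in 0..t, kumaraswamyPDF a b x = kumaraswamyCDF a b t := by
  have hint : IntervalIntegrable (kumaraswamyPDF a b) volume 0 t :=
    ((intervalIntegrable_iff_integrableOn_Ioc_of_le zero_le_one).2
      (integrableOn_kumaraswamyPDF ha hb)).mono_set (uIcc_subset_uIcc_left (by simp [ht.1, ht.2]))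
  rw [intervalIntegral.integral_eq_sub_of_hasDerivAt_of_le ht.1
    (continuous_kumaraswamyCDF ha hb).continuousOn
    (fun x hx => hasDerivAt_kumaraswamyCDF ha ⟨hx.1, hx.2.trans_le ht.2⟩) hint,
    kumaraswamyCDF_zero ha, sub_zero]

lemma kumaraswamyPDF_mul_inv_one_sub_rpow (ha : 0 < a) (hb : b ≠ 1) (hx : x ∈ Ioo (0 : ℝ) 1) :
    kumaraswamyPDF a b x * (1 - x ^ a)⁻¹ = b / (b - 1) * kumaraswamyPDF a (b - 1) x := by
  have hpos := one_sub_rpow_pos ha hx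
  have hb' : b - 1 ≠ 0 := sub_ne_zero.2 hb
  unfold kumaraswamyPDF
  rw [Real.rpow_sub_one hpos.ne' (b - 1)]
  field_simp

end Kumaraswamy

section KumaraswamyMeasure

variable {a b t : ℝ}

lemma kumaraswamyMeasure_restrict_Icc (ht : t ∈ Icc (0 : ℝ) 1) :
    (kumaraswamyMeasure a b).restrict (Icc 0 t) =
      (volume.restrict (Ioo 0 t)).withDensity fun x => ENNReal.ofReal (kumaraswamyPDF a b x) := by
  have hset : (Icc 0 t ∩ Ioo 0 1 : Set ℝ) =ᵐ[volume] Ioo 0 t := by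
    refine (Filter.EventuallyLE.trans ?_ Ioo_ae_eq_Ioc.symm.le).antisymm ?_
    · exact LE.le.eventuallyLE fun x hx => ⟨hx.2.1, hx.1.2⟩
    · exact LE.le.eventuallyLE fun x hx => ⟨Ioo_subset_Icc_self hx, hx.1, hx.2.trans_le ht.2⟩
  rw [kumaraswamyMeasure, restrict_withDensity measurableSet_Icc,
    Measure.restrict_restrict measurableSet_Icc, Measure.restrict_congr_set hset]

lemma isProbabilityMeasure_kumaraswamyMeasure (ha : 0 < a) (hb : 0 < b) :
    IsProbabilityMeasure (kumaraswamyMeasure a b) := by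
  constructor
  rw [kumaraswamyMeasure, withDensity_apply _ MeasurableSet.univ, Measure.restrict_univ,
    ← ofReal_integral_eq_lintegral_ofReal, ← integral_Ioc_eq_integral_Ioo,
    ← intervalIntegral.integral_of_le zero_le_one,
    integral_kumaraswamyPDF ha hb ⟨zero_le_one, le_rfl⟩, kumaraswamyCDF_one hb,
    ENNReal.ofReal_one]
  · exact (integrableOn_kumaraswamyPDF ha hb).mono_set Ioo_subset_Ioc_self
  · exact (ae_restrict_iff' measurableSet_Ioo).2 <|
      ae_of_all _ fun _ => kumaraswamyPDF_nonneg ha hb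

lemma setIntegral_Icc_kumaraswamyMeasure (ha : 0 < a) (hb : 0 < b) (ht : t ∈ Icc (0 : ℝ) 1)
    (g : ℝ → ℝ) :
    ∫ x in Icc 0 t, g x ∂kumaraswamyMeasure a b =
      ∫ x in 0..t, kumaraswamyPDF a b x * g x := by
  rw [kumaraswamyMeasure_restrict_Icc ht, integral_withDensity_eq_integral_toReal_smul
      (by unfold kumaraswamyPDF; fun_prop) (ae_of_all _ fun _ => ENNReal.ofReal_lt_top),
    intervalIntegral.integral_of_le ht.1, integral_Ioc_eq_integral_Ioo]
  refine setIntegral_congr_fun measurableSet_Ioo fun x hx => ?_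
  rw [ENNReal.toReal_ofReal (kumaraswamyPDF_nonneg ha hb ⟨hx.1, hx.2.trans_le ht.2⟩),
    smul_eq_mul]

lemma integrableOn_Icc_kumaraswamyMeasure (ha : 0 < a) (hb : 0 < b) (ht : t ∈ Icc (0 : ℝ) 1)
    {g : ℝ → ℝ} (hg : IntegrableOn (fun x => kumaraswamyPDF a b x * g x) (Ioo 0 t)) :
    IntegrableOn g (Icc 0 t) (kumaraswamyMeasure a b) := by
  rw [IntegrableOn, kumaraswamyMeasure_restrict_Icc ht, integrable_withDensity_iff
      (by unfold kumaraswamyPDF; fun_prop) (ae_of_all _ fun _ => ENNReal.ofReal_lt_top)]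
  refine hg.congr_fun (fun x hx => ?_) measurableSet_Ioo
  rw [ENNReal.toReal_ofReal (kumaraswamyPDF_nonneg ha hb ⟨hx.1, hx.2.trans_le ht.2⟩), mul_comm]

lemma kumaraswamyPDF_mul_inv_one_sub_rpow_ae (ha : 0 < a) (hb : b ≠ 1) (ht : t ≤ 1) :
    (fun x => kumaraswamyPDF a b x * (1 - x ^ a)⁻¹) =ᵐ[volume.restrict (Ioo 0 t)]
      fun x => b / (b - 1) * kumaraswamyPDF a (b - 1) x :=
  (ae_restrict_iff' measurableSet_Ioo).2 <| ae_of_all _ fun _ hx =>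
    kumaraswamyPDF_mul_inv_one_sub_rpow ha hb ⟨hx.1, hx.2.trans_le ht⟩

lemma integrableOn_Icc_inv_one_sub_rpow_kumaraswamyMeasure (ha : 0 < a) (hb : 1 < b)
    (ht : t ∈ Icc (0 : ℝ) 1) :
    IntegrableOn (fun x => (1 - x ^ a)⁻¹) (Icc 0 t) (kumaraswamyMeasure a b) := by
  refine integrableOn_Icc_kumaraswamyMeasure ha (by linarith) ht <|
    Integrable.congr ?_ (kumaraswamyPDF_mul_inv_one_sub_rpow_ae ha hb.ne' ht.2).symm
  exact ((integrableOn_kumaraswamyPDF ha (by linarith)).mono_set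
    (Ioo_subset_Ioc_self.trans (Ioc_subset_Ioc_right ht.2))).const_mul _

lemma setIntegral_Icc_inv_one_sub_rpow_kumaraswamyMeasure (ha : 0 < a) (hb : 1 < b)
    (ht : t ∈ Icc (0 : ℝ) 1) :
    ∫ x in Icc 0 t, (1 - x ^ a)⁻¹ ∂kumaraswamyMeasure a b =
      b / (b - 1) * kumaraswamyCDF a (b - 1) t := by
  rw [setIntegral_Icc_kumaraswamyMeasure ha (by linarith) ht,
    intervalIntegral.integral_of_le ht.1, integral_Ioc_eq_integral_Ioo,
    integral_congr_ae (kumaraswamyPDF_mul_inv_one_sub_rpow_ae ha hb.ne' ht.2), integral_const_mul,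
    ← integral_Ioc_eq_integral_Ioo, ← intervalIntegral.integral_of_le ht.1,
    integral_kumaraswamyPDF ha (by linarith) ht]

lemma isProbabilityMeasure_kumaraswamyMixture {γ : ℝ} (ha : 0 < a) (hb : 0 < b)
    (hγ : γ ∈ Icc (0 : ℝ) 1) : IsProbabilityMeasure (kumaraswamyMixture γ a b) := by
  have := isProbabilityMeasure_kumaraswamyMeasure ha hb
  constructor
  rw [kumaraswamyMixture, Measure.add_apply, Measure.smul_apply, Measure.smul_apply, measure_univ,
    measure_univ, smul_eq_mul, smul_eq_mul, mul_one, mul_one,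
    ← ENNReal.ofReal_add (sub_nonneg.2 hγ.2) hγ.1, sub_add_cancel, ENNReal.ofReal_one]

lemma setIntegral_Icc_inv_one_sub_rpow_kumaraswamyMixture {γ : ℝ} (ha : 0 < a) (hb : 1 < b)
    (hγ : γ ∈ Icc (0 : ℝ) 1) (ht : t ∈ Icc (0 : ℝ) 1) :
    ∫ x in Icc 0 t, (1 - x ^ a)⁻¹ ∂kumaraswamyMixture γ a b =
      (1 - γ) + γ * (b / (b - 1) * kumaraswamyCDF a (b - 1) t) := by
  rw [kumaraswamyMixture, Measure.restrict_add, Measure.restrict_smul, Measure.restrict_smul,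
    integral_add_measure, integral_smul_measure, integral_smul_measure, setIntegral_dirac,
    if_pos ⟨le_rfl, ht.1⟩, setIntegral_Icc_inv_one_sub_rpow_kumaraswamyMeasure ha hb ht,
    ENNReal.toReal_ofReal hγ.1, ENNReal.toReal_ofReal (sub_nonneg.2 hγ.2),
    Real.zero_rpow ha.ne', sub_zero, inv_one, smul_eq_mul, smul_eq_mul, mul_one]
  · exact (integrable_dirac enorm_lt_top).integrableOn.smul_measure ENNReal.ofReal_ne_top
  · exact (integrableOn_Icc_inv_one_sub_rpow_kumaraswamyMeasure ha hb ht).smul_measure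
      ENNReal.ofReal_ne_top

end KumaraswamyMeasure

/-- Explicit weight function for the continuous mixing
distribution of the rejection sampling algorithm: with
`ρ = (1−γ)·δ₀ + (density γβα λ^{α−1}(1−λ^α)^{β−1} on (0,1))·Lebesgue`,
`ρ` is a probability measure, and for all `t ∈ [0,1]`,
`∫_{[0,t]} (1−λ^α)⁻¹ dρ(λ) = (β − 1 + γ(1 − β(1−t^α)^{β−1}))/(β−1)`;
in particular at `t = 1` the value is `1 + γ/(β−1)`. -/
theorem rejection_continuous_mixing_weights
    (α β γ : ℝ) (hα : 1 ≤ α) (hβ : 1 < β) (hγ : γ ∈ Set.Ico (0:ℝ) 1)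
    (ρ : Measure ℝ)
    (hρ : ρ = ENNReal.ofReal (1 - γ) • Measure.dirac (0:ℝ) +
      (volume.restrict (Set.Ioo (0:ℝ) 1)).withDensity
        (fun l => ENNReal.ofReal (γ * β * α * l ^ (α - 1) * (1 - l ^ α) ^ (β - 1)))) :
    IsProbabilityMeasure ρ ∧
    (∀ t ∈ Set.Icc (0:ℝ) 1,
      ∫ l in Set.Icc (0:ℝ) t, (1 - l ^ α)⁻¹ ∂ρ
        = (β - 1 + γ * (1 - β * (1 - t ^ α) ^ (β - 1))) / (β - 1)) ∧
    ∫ l in Set.Icc (0:ℝ) 1, (1 - l ^ α)⁻¹ ∂ρ = 1 + γ / (β - 1) := by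
  have ha : 0 < α := by linarith
  have hb1 : β - 1 ≠ 0 := (sub_pos.2 hβ).ne'
  have hγ' : γ ∈ Icc (0 : ℝ) 1 := Ico_subset_Icc_self hγ
  have hmix : ρ = kumaraswamyMixture γ α β := by
    rw [hρ, kumaraswamyMixture, kumaraswamyMeasure,
      ← withDensity_smul' _ _ ENNReal.ofReal_ne_top]
    congr with l
    rw [Pi.smul_apply, smul_eq_mul, ← ENNReal.ofReal_mul hγ.1, kumaraswamyPDF]
    ring_nf
  subst hmix
  have hweight (t : ℝ) (ht : t ∈ Icc (0 : ℝ) 1) :=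
    setIntegral_Icc_inv_one_sub_rpow_kumaraswamyMixture ha hβ hγ' ht
  refine ⟨isProbabilityMeasure_kumaraswamyMixture ha (by linarith) hγ', fun t ht => ?_, ?_⟩
  · rw [hweight t ht, kumaraswamyCDF]
    field_simp
    ring
  · rw [hweight 1 ⟨zero_le_one, le_rfl⟩, kumaraswamyCDF_one (sub_pos.2 hβ)]
    field_simp
    ring
end

section
/- Let β > 1 and γ ∈ [0,1). Let ρ be the measure on [0,1) given by ρ = (1−γ)·δ_0 + the measure with Lebesgue density λ ↦ γ·β·(1−λ)^{β−1} on (0,1), where δ_0 is the Dirac measure at 0. Then ρ is a probability measure, and for every u ∈ (0,1]^d, (1/d) ∑_{i=1}^d ∫_{[0,u_i)} (1−λ)^{-1} dρ(λ) = (β − 1 + γ − γβ·d^{-1} ∑_{i=1}^d (1−u_i)^{β−1}) / (β − 1); equivalently, the direct-sampling weight function equals w(u) = (β−1) / (β − 1 + γ − γβ·d^{-1} ∑_{i=1}^d (1−u_i)^{β−1}). -/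
/-!
The atom `(1 - γ) δ₀` contributes `1 - γ` to every integral `∫_{[0,u)} (1 - λ)⁻¹ dρ`, while the
density part contributes `γβ ∫₀ᵘ (1 - λ)^{β-2} dλ = γβ (1 - (1 - u)^{β-1}) / (β - 1)`, which is
finite exactly because `β > 1`. Averaging over the coordinates gives the formula; the total mass
is `(1 - γ) + γβ ∫₀¹ (1 - λ)^{β-1} dλ = 1`.
-/

open MeasureTheory Set
open scoped ENNReal

theorem integral_one_sub_rpow {r : ℝ} (hr : -1 < r) (u : ℝ) :
    ∫ x in (0:ℝ)..u, (1 - x) ^ r = (1 - (1 - u) ^ (r + 1)) / (r + 1) := by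
  rw [intervalIntegral.integral_comp_sub_left (fun x => x ^ r) 1, integral_rpow (Or.inl hr),
    sub_zero, Real.one_rpow]

theorem integrableOn_Ioo_one_sub_rpow {r : ℝ} (hr : -1 < r) {u : ℝ} (hu : 0 ≤ u) :
    IntegrableOn (fun x : ℝ => (1 - x) ^ r) (Ioo 0 u) := by
  rw [← intervalIntegrable_iff_integrableOn_Ioo_of_le hu]
  simpa using
    ((intervalIntegral.intervalIntegrable_rpow' hr (a := 1 - u) (b := 1)).comp_sub_left 1).symm

section

variable {c β : ℝ}

theorem withDensity_one_sub_rpow_univ (hc : 0 ≤ c) (hβ : 0 < β) :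
    (volume.restrict (Ioo (0:ℝ) 1)).withDensity
      (fun l => ENNReal.ofReal (c * (1 - l) ^ (β - 1))) univ = ENNReal.ofReal (c / β) := by
  have hnn : 0 ≤ᵐ[volume.restrict (Ioo (0:ℝ) 1)] fun l => c * (1 - l) ^ (β - 1) :=
    (ae_restrict_iff' measurableSet_Ioo).2 <| .of_forall fun x hx =>
      mul_nonneg hc (Real.rpow_nonneg (by linarith [hx.2]) _)
  rw [withDensity_apply _ MeasurableSet.univ, Measure.restrict_univ,
    ← ofReal_integral_eq_lintegral_ofReal
      ((integrableOn_Ioo_one_sub_rpow (by linarith) zero_le_one).const_mul c) hnn,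
    ← integral_Ioc_eq_integral_Ioo, ← intervalIntegral.integral_of_le zero_le_one,
    intervalIntegral.integral_const_mul, integral_one_sub_rpow (by linarith), sub_add_cancel,
    sub_self, Real.zero_rpow hβ.ne', sub_zero, mul_one_div]

theorem restrict_Ico_withDensity {u : ℝ} (hu : u ≤ 1) (f : ℝ → ℝ≥0∞) :
    ((volume.restrict (Ioo (0:ℝ) 1)).withDensity f).restrict (Ico 0 u)
      = (volume.restrict (Ioo 0 u)).withDensity f := by
  rw [restrict_withDensity measurableSet_Ico, Measure.restrict_restrict measurableSet_Ico]
  congr 2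
  ext x
  simp only [mem_inter_iff, mem_Ico, mem_Ioo]
  constructor
  · rintro ⟨⟨-, hxu⟩, hx0, -⟩; exact ⟨hx0, hxu⟩
  · rintro ⟨hx0, hxu⟩; exact ⟨⟨hx0.le, hxu⟩, hx0, hxu.trans_le hu⟩

theorem toReal_ofReal_mul_rpow_smul_inv (hc : 0 ≤ c) {x : ℝ} (hx : x < 1) :
    (ENNReal.ofReal (c * (1 - x) ^ (β - 1))).toReal • (1 - x)⁻¹ = c * (1 - x) ^ (β - 2) := by
  have hx' : 0 < 1 - x := by linarith
  rw [ENNReal.toReal_ofReal (mul_nonneg hc (Real.rpow_nonneg hx'.le _)), smul_eq_mul,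
    show β - 1 = β - 2 + 1 by ring, Real.rpow_add_one hx'.ne', mul_assoc, mul_assoc,
    mul_inv_cancel₀ hx'.ne', mul_one]

theorem measurable_ofReal_mul_one_sub_rpow :
    Measurable fun l : ℝ => ENNReal.ofReal (c * (1 - l) ^ (β - 1)) := by
  fun_prop

variable {u : ℝ}

theorem integrableOn_Ico_inv_one_sub_withDensity (hc : 0 ≤ c) (hβ : 1 < β) (hu₀ : 0 ≤ u)
    (hu₁ : u ≤ 1) :
    IntegrableOn (fun l : ℝ => (1 - l)⁻¹) (Ico 0 u) ((volume.restrict (Ioo (0:ℝ) 1)).withDensity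
      (fun l => ENNReal.ofReal (c * (1 - l) ^ (β - 1)))) := by
  rw [IntegrableOn, restrict_Ico_withDensity hu₁, integrable_withDensity_iff_integrable_smul'
    measurable_ofReal_mul_one_sub_rpow (ae_of_all _ fun _ => ENNReal.ofReal_lt_top)]
  refine ((integrableOn_Ioo_one_sub_rpow (r := β - 2) (by linarith) hu₀).const_mul c).congr ?_
  exact (ae_restrict_iff' measurableSet_Ioo).2 <| .of_forall fun x hx =>
    (toReal_ofReal_mul_rpow_smul_inv hc (hx.2.trans_le hu₁)).symm

theorem setIntegral_Ico_inv_one_sub_withDensity (hc : 0 ≤ c) (hβ : 1 < β) (hu₀ : 0 ≤ u)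
    (hu₁ : u ≤ 1) :
    ∫ l in Ico 0 u, (1 - l)⁻¹ ∂(volume.restrict (Ioo (0:ℝ) 1)).withDensity
      (fun l => ENNReal.ofReal (c * (1 - l) ^ (β - 1)))
      = c * (1 - (1 - u) ^ (β - 1)) / (β - 1) := by
  rw [restrict_Ico_withDensity hu₁, integral_withDensity_eq_integral_toReal_smul
      measurable_ofReal_mul_one_sub_rpow (ae_of_all _ fun _ => ENNReal.ofReal_lt_top),
    setIntegral_congr_fun measurableSet_Ioo
      fun x hx => toReal_ofReal_mul_rpow_smul_inv hc (hx.2.trans_le hu₁),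
    ← integral_Ioc_eq_integral_Ioo, ← intervalIntegral.integral_of_le hu₀,
    intervalIntegral.integral_const_mul, integral_one_sub_rpow (by linarith),
    show β - 2 + 1 = β - 1 by ring, mul_div_assoc]

end

/-- The law with distribution function `(1 - γ) + γ (1 - (1 - λ) ^ β)` on `[0, 1)`. -/
noncomputable def mixingMeasure (β γ : ℝ) : Measure ℝ :=
  ENNReal.ofReal (1 - γ) • Measure.dirac 0 + (volume.restrict (Ioo 0 1)).withDensity
    (fun l => ENNReal.ofReal (γ * β * (1 - l) ^ (β - 1)))

theorem isProbabilityMeasure_mixingMeasure {β γ : ℝ} (hβ : 0 < β) (hγ₀ : 0 ≤ γ) (hγ₁ : γ ≤ 1) :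
    IsProbabilityMeasure (mixingMeasure β γ) := by
  constructor
  rw [mixingMeasure, Measure.add_apply, Measure.smul_apply, measure_univ, smul_eq_mul, mul_one,
    withDensity_one_sub_rpow_univ (by positivity) hβ, mul_div_cancel_right₀ _ hβ.ne',
    ← ENNReal.ofReal_add (by linarith) hγ₀, sub_add_cancel, ENNReal.ofReal_one]

theorem setIntegral_Ico_inv_one_sub_mixingMeasure {β γ u : ℝ} (hβ : 1 < β) (hγ₀ : 0 ≤ γ)
    (hγ₁ : γ ≤ 1) (hu₀ : 0 < u) (hu₁ : u ≤ 1) :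
    ∫ l in Ico 0 u, (1 - l)⁻¹ ∂mixingMeasure β γ
      = (β - 1 + γ - γ * β * (1 - u) ^ (β - 1)) / (β - 1) := by
  classical
  have hdirac : IntegrableOn (fun l : ℝ => (1 - l)⁻¹) (Ico 0 u)
      (ENNReal.ofReal (1 - γ) • Measure.dirac 0) :=
    ((integrable_dirac enorm_lt_top).smul_measure ENNReal.ofReal_ne_top).integrableOn
  rw [mixingMeasure, Measure.restrict_add, integral_add_measure hdirac
      (integrableOn_Ico_inv_one_sub_withDensity (by positivity) hβ hu₀.le hu₁),
    setIntegral_Ico_inv_one_sub_withDensity (by positivity) hβ hu₀.le hu₁,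
    Measure.restrict_smul, integral_smul_measure, restrict_dirac' measurableSet_Ico,
    if_pos ⟨le_rfl, hu₀⟩, integral_dirac, ENNReal.toReal_ofReal (by linarith)]
  have hβ₁ : β - 1 ≠ 0 := (sub_pos.2 hβ).ne'
  field_simp
  ring

/-- Explicit weight function for the continuous mixing
distribution of the direct sampling algorithm: with
`ρ = (1−γ)·δ₀ + (density γβ(1−λ)^{β−1} on (0,1))·Lebesgue`, `ρ` is a probability
measure, and for every `u ∈ (0,1]^d`,
`(1/d) ∑_i ∫_{[0,u_i)} (1−λ)⁻¹ dρ(λ)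
  = (β − 1 + γ − γβ d⁻¹ ∑_i (1−u_i)^{β−1})/(β−1)`;
equivalently the direct-sampling weight function is
`w(u) = (β−1)/(β − 1 + γ − γβ d⁻¹ ∑_i (1−u_i)^{β−1})`. -/
theorem direct_continuous_mixing_weights
    {d : ℕ} (hd : 0 < d) (β γ : ℝ) (hβ : 1 < β) (hγ : γ ∈ Set.Ico (0:ℝ) 1)
    (ρ : Measure ℝ)
    (hρ : ρ = ENNReal.ofReal (1 - γ) • Measure.dirac (0:ℝ) +
      (volume.restrict (Set.Ioo (0:ℝ) 1)).withDensity
        (fun l => ENNReal.ofReal (γ * β * (1 - l) ^ (β - 1)))) :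
    IsProbabilityMeasure ρ ∧
    (∀ u : Fin d → ℝ, (∀ i, u i ∈ Set.Ioc (0:ℝ) 1) →
      (d : ℝ)⁻¹ * ∑ i : Fin d, ∫ l in Set.Ico (0:ℝ) (u i), (1 - l)⁻¹ ∂ρ
        = (β - 1 + γ - γ * β * (d : ℝ)⁻¹ * ∑ i : Fin d, (1 - u i) ^ (β - 1))
            / (β - 1)) ∧
    (∀ u : Fin d → ℝ, (∀ i, u i ∈ Set.Ioc (0:ℝ) 1) →
      ((d : ℝ)⁻¹ * ∑ i : Fin d, ∫ l in Set.Ico (0:ℝ) (u i), (1 - l)⁻¹ ∂ρ)⁻¹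
        = (β - 1)
            / (β - 1 + γ - γ * β * (d : ℝ)⁻¹ * ∑ i : Fin d, (1 - u i) ^ (β - 1))) := by
  obtain ⟨hγ₀, hγ₁⟩ := hγ
  obtain rfl : ρ = mixingMeasure β γ := hρ
  have hmean : ∀ u : Fin d → ℝ, (∀ i, u i ∈ Ioc (0:ℝ) 1) →
      (d : ℝ)⁻¹ * ∑ i : Fin d, ∫ l in Ico (0:ℝ) (u i), (1 - l)⁻¹ ∂mixingMeasure β γ
        = (β - 1 + γ - γ * β * (d : ℝ)⁻¹ * ∑ i : Fin d, (1 - u i) ^ (β - 1)) / (β - 1) := by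
    intro u hu
    have hd' : (d : ℝ) ≠ 0 := Nat.cast_ne_zero.2 hd.ne'
    have hβ₁ : β - 1 ≠ 0 := (sub_pos.2 hβ).ne'
    rw [Finset.sum_congr rfl fun i _ => setIntegral_Ico_inv_one_sub_mixingMeasure hβ hγ₀ hγ₁.le
        (hu i).1 (hu i).2, ← Finset.sum_div, Finset.sum_sub_distrib, ← Finset.mul_sum,
      Finset.sum_const, Finset.card_univ, Fintype.card_fin, nsmul_eq_mul]
    field_simp
  exact ⟨isProbabilityMeasure_mixingMeasure (by linarith) hγ₀ hγ₁.le, hmean,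
    fun u hu => by rw [hmean u hu, inv_div]⟩
end

section
/- Let μ be a Borel probability measure on [0,1]^d, let 0 = x_1 < x_2 < … < x_n < 1 with δ_k = μ([0,x_k]^d) < 1 for all k, and suppose s = x_{k*} for some k* ∈ {1,…,n} with s > 0. Define p̃_k = (1{x_k ≥ s} − 1{x_{k−1} ≥ s})(1 − δ_k) for k = 2,…,n and p̃_1 = 1{x_1 ≥ s}(1 − δ_1). Then: (i) ∑_{k=1}^n p̃_k = 1 − μ([0,s]^d); (ii) for every u ∈ [0,1]^d with max_{1≤i≤d} u_i > s, ∑_{k : x_k ≤ max_i u_i} p̃_k/(1 − δ_k) = 1, so the calibrated weight w(u) = (∑_{k=1}^n p̃_k)·(∑_{k : x_k ≤ max_i u_i} p̃_k/(1 − δ_k))^{-1} equals 1 − μ([0,s]^d); and (iii) consequently ∫_{[0,1]^d} 1{max_i u_i > s} · w(u) dμ(u) = (μ({u : max_i u_i > s}))². -/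
open MeasureTheory
open scoped Classical

/-! Since `x` is strictly increasing and `s = x k*` with `k* ≥ 2` (because `x 1 = 0 < s`), the
indicator `1{s ≤ x k}` is the step `1{k* ≤ k}`, whose increments vanish except at `k*`. Hence the
only nonzero `p̃ k` is `p̃ k* = 1 - δ k* = 1 - μ([0,s]^d)`, every `u` with `max u > s` sees this
atom, and the calibrated weight is the constant `1 - μ([0,s]^d)` on the rare event. As `μ` lives
on the nonnegative orthant, that constant is exactly `μ(max u > s)`. -/

-- `0 ≤ s` covers empty `ι`, where `⨆ i, u i = 0`.
lemma Real.iSup_le_iff_of_nonneg {ι : Type*} [Finite ι] {u : ι → ℝ} {s : ℝ} (hs : 0 ≤ s) :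
    ⨆ i, u i ≤ s ↔ ∀ i, u i ≤ s :=
  ⟨fun h i => (le_ciSup (Set.finite_range u).bddAbove i).trans h, fun h => Real.iSup_le h hs⟩

section MaxCoordinate

variable {ι : Type*} [Finite ι] {μ : Measure (ι → ℝ)}

lemma measurableSet_lt_iSup (s : ℝ) : MeasurableSet {u : ι → ℝ | s < ⨆ i, u i} :=
  measurableSet_lt measurable_const (Measurable.iSup measurable_pi_apply)

lemma setOf_lt_iSup_ae_eq_compl (hμ : ∀ᵐ u ∂μ, ∀ i, 0 ≤ u i) {s : ℝ} (hs : 0 ≤ s) :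
    {u : ι → ℝ | s < ⨆ i, u i}
      =ᵐ[μ] ((Set.pi Set.univ fun _ => Set.Icc (0:ℝ) s)ᶜ : Set (ι → ℝ)) := by
  filter_upwards [hμ] with u hu
  change (s < ⨆ i, u i) = (u ∉ Set.pi Set.univ fun _ => Set.Icc (0:ℝ) s)
  rw [← not_le, Real.iSup_le_iff_of_nonneg hs]
  simp only [Set.mem_univ_pi, Set.mem_Icc, hu, true_and]

lemma measureReal_lt_iSup_eq_one_sub [IsProbabilityMeasure μ] (hμ : ∀ᵐ u ∂μ, ∀ i, 0 ≤ u i)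
    {s : ℝ} (hs : 0 ≤ s) :
    μ.real {u : ι → ℝ | s < ⨆ i, u i}
      = 1 - μ.real (Set.pi Set.univ fun _ => Set.Icc (0:ℝ) s) := by
  rw [measureReal_congr (setOf_lt_iSup_ae_eq_compl hμ hs),
    probReal_compl_eq_one_sub (MeasurableSet.univ_pi fun _ => measurableSet_Icc)]

end MaxCoordinate

lemma calibrated_prob_eq_ite {n kstar : ℕ} {x δ p : ℕ → ℝ} {s : ℝ}
    (hx : StrictMonoOn x (Set.Icc 1 n)) (hk : kstar ∈ Set.Icc 2 n) (hsx : s = x kstar)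
    (hp1 : p 1 = (if s ≤ x 1 then (1:ℝ) else 0) * (1 - δ 1))
    (hpk : ∀ k, 2 ≤ k → k ≤ n →
      p k = ((if s ≤ x k then (1:ℝ) else 0) - (if s ≤ x (k - 1) then (1:ℝ) else 0))
        * (1 - δ k)) :
    ∀ k ∈ Finset.Icc 1 n, p k = if k = kstar then 1 - δ kstar else 0 := by
  have hk' : kstar ∈ Set.Icc 1 n := ⟨by grind, hk.2⟩
  have hstep : ∀ k ∈ Set.Icc 1 n, s ≤ x k ↔ kstar ≤ k := fun k hk =>
    hsx ▸ hx.le_iff_le hk' hk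
  intro k hkn
  rw [Finset.mem_Icc] at hkn
  obtain rfl | hk2 := eq_or_lt_of_le hkn.1
  · rw [hp1, if_neg (by rw [hstep 1 ⟨le_rfl, hkn.2⟩]; grind), if_neg (by grind), zero_mul]
  · rw [hpk k hk2 hkn.2, if_congr (hstep k ⟨hkn.1, hkn.2⟩) rfl rfl,
      if_congr (hstep (k - 1) ⟨by omega, by omega⟩) rfl rfl]
    split_ifs <;> first | omega | (subst_vars; ring)

theorem rare_event_calibrated_bounded_relative_error_general
    {d : ℕ} (μ : Measure (Fin d → ℝ)) [IsProbabilityMeasure μ]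
    (hμcube : μ (Set.pi Set.univ fun _ => Set.Icc (0:ℝ) 1) = 1)
    (n : ℕ) (x : ℕ → ℝ) (hx1 : x 1 = 0)
    (hxmono : ∀ k, 1 ≤ k → k < n → x k < x (k + 1))
    (δ : ℕ → ℝ)
    (hδ : ∀ k, 1 ≤ k → k ≤ n →
      δ k = (μ (Set.pi Set.univ fun _ => Set.Icc (0:ℝ) (x k))).toReal)
    (hδlt : ∀ k, 1 ≤ k → k ≤ n → δ k < 1)
    (s : ℝ) (hspos : 0 < s)
    (kstar : ℕ) (hk1 : 1 ≤ kstar) (hkn : kstar ≤ n) (hsx : s = x kstar)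
    (p : ℕ → ℝ)
    (hp1 : p 1 = (if s ≤ x 1 then (1:ℝ) else 0) * (1 - δ 1))
    (hpk : ∀ k, 2 ≤ k → k ≤ n →
      p k = ((if s ≤ x k then (1:ℝ) else 0) - (if s ≤ x (k - 1) then (1:ℝ) else 0))
        * (1 - δ k))
    (w : (Fin d → ℝ) → ℝ)
    (hw : ∀ u, w u = (∑ k ∈ Finset.Icc 1 n, p k) *
      (∑ k ∈ (Finset.Icc 1 n).filter (fun k => x k ≤ ⨆ i, u i),
        p k / (1 - δ k))⁻¹) :
    (∑ k ∈ Finset.Icc 1 n, p k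
        = 1 - (μ (Set.pi Set.univ fun _ => Set.Icc (0:ℝ) s)).toReal) ∧
    (∀ u : Fin d → ℝ, (∀ i, u i ∈ Set.Icc (0:ℝ) 1) → s < ⨆ i, u i →
      (∑ k ∈ (Finset.Icc 1 n).filter (fun k => x k ≤ ⨆ i, u i),
          p k / (1 - δ k)) = 1 ∧
      w u = 1 - (μ (Set.pi Set.univ fun _ => Set.Icc (0:ℝ) s)).toReal) ∧
    ∫ u in {u : Fin d → ℝ | s < ⨆ i, u i}, w u ∂μ
      = (μ {u : Fin d → ℝ | s < ⨆ i, u i}).toReal ^ 2 := by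
  have hx : StrictMonoOn x (Set.Icc 1 n) :=
    strictMonoOn_of_lt_add_one Set.ordConnected_Icc fun k _ hk hk' => hxmono k hk.1 hk'.2
  have hkstar : kstar ≠ 1 := by rintro rfl; linarith
  have hp := calibrated_prob_eq_ite hx ⟨by omega, hkn⟩ hsx hp1 hpk
  have hmem : kstar ∈ Finset.Icc 1 n := Finset.mem_Icc.2 ⟨hk1, hkn⟩
  have hsum : ∑ k ∈ Finset.Icc 1 n, p k = 1 - δ kstar := by
    rw [Finset.sum_eq_single_of_mem kstar hmem fun k hk hne => by rw [hp k hk, if_neg hne],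
      hp kstar hmem, if_pos rfl]
  have hfilter : ∀ u : Fin d → ℝ, s < ⨆ i, u i →
      ∑ k ∈ (Finset.Icc 1 n).filter (fun k => x k ≤ ⨆ i, u i), p k / (1 - δ k) = 1 := by
    intro u hu
    rw [Finset.sum_eq_single_of_mem kstar (Finset.mem_filter.2 ⟨hmem, hsx ▸ hu.le⟩)
      fun k hk hne => by rw [hp k (Finset.mem_of_mem_filter k hk), if_neg hne, zero_div],
      hp kstar hmem, if_pos rfl]
    exact div_self (sub_ne_zero.2 (hδlt kstar hk1 hkn).ne')
  have hδs : δ kstar = (μ (Set.pi Set.univ fun _ => Set.Icc (0:ℝ) s)).toReal := by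
    rw [hδ kstar hk1 hkn, hsx]
  have hweight : ∀ u : Fin d → ℝ, s < ⨆ i, u i →
      w u = 1 - (μ (Set.pi Set.univ fun _ => Set.Icc (0:ℝ) s)).toReal := fun u hu => by
    rw [hw, hfilter u hu, inv_one, mul_one, hsum, hδs]
  have hμ : ∀ᵐ u ∂μ, ∀ i, 0 ≤ u i := by
    filter_upwards [(mem_ae_iff_prob_eq_one
      (MeasurableSet.univ_pi fun _ => measurableSet_Icc)).2 hμcube] with u hu i
    exact (hu i trivial).1
  have hrare := measureReal_lt_iSup_eq_one_sub hμ hspos.le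
  simp only [measureReal_def] at hrare
  refine ⟨hsum.trans (congrArg _ hδs), fun u _ hu => ⟨hfilter u hu, hweight u hu⟩, ?_⟩
  rw [setIntegral_congr_fun (measurableSet_lt_iSup s) hweight, ← hrare, setIntegral_const,
    smul_eq_mul, sq, measureReal_def]

/-- Bounded relative error of the calibrated rejection-sampling
scheme for the rare-event functional `Ψ^{(s)}(u) = 1{max_i u_i > s}`: with atoms
`0 = x 1 < … < x n < 1`, diagonal values `δ k = μ([0, x k]^d) < 1`, `s = x k*` an
atom with `s > 0`, and unnormalized calibrated probabilities
`p̃ 1 = 1{x 1 ≥ s}(1 − δ 1)`, `p̃ k = (1{x k ≥ s} − 1{x (k−1) ≥ s})(1 − δ k)`,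
one has: (i) `∑_k p̃ k = 1 − μ([0,s]^d)`; (ii) for every `u ∈ [0,1]^d` with
`max_i u_i > s`, `∑_{k : x k ≤ max_i u_i} p̃ k/(1 − δ k) = 1` and the calibrated
weight `w(u)` equals `1 − μ([0,s]^d)`; (iii) consequently
`∫ 1{max_i u_i > s} · w(u) dμ(u) = μ({u : max_i u_i > s})²`. -/
theorem rare_event_calibrated_bounded_relative_error
    {d : ℕ} (hd : 0 < d) (μ : Measure (Fin d → ℝ)) [IsProbabilityMeasure μ]
    (hμcube : μ (Set.pi Set.univ fun _ => Set.Icc (0:ℝ) 1) = 1)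
    (n : ℕ) (hn : 1 ≤ n) (x : ℕ → ℝ) (hx1 : x 1 = 0)
    (hxmono : ∀ k, 1 ≤ k → k < n → x k < x (k + 1)) (hxn : x n < 1)
    (δ : ℕ → ℝ)
    (hδ : ∀ k, 1 ≤ k → k ≤ n →
      δ k = (μ (Set.pi Set.univ fun _ => Set.Icc (0:ℝ) (x k))).toReal)
    (hδlt : ∀ k, 1 ≤ k → k ≤ n → δ k < 1)
    (s : ℝ) (hspos : 0 < s)
    (kstar : ℕ) (hk1 : 1 ≤ kstar) (hkn : kstar ≤ n) (hsx : s = x kstar)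
    (p : ℕ → ℝ)
    (hp1 : p 1 = (if s ≤ x 1 then (1:ℝ) else 0) * (1 - δ 1))
    (hpk : ∀ k, 2 ≤ k → k ≤ n →
      p k = ((if s ≤ x k then (1:ℝ) else 0) - (if s ≤ x (k - 1) then (1:ℝ) else 0))
        * (1 - δ k))
    (w : (Fin d → ℝ) → ℝ)
    (hw : ∀ u, w u = (∑ k ∈ Finset.Icc 1 n, p k) *
      (∑ k ∈ (Finset.Icc 1 n).filter (fun k => x k ≤ ⨆ i, u i),
        p k / (1 - δ k))⁻¹) :
    (∑ k ∈ Finset.Icc 1 n, p k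
        = 1 - (μ (Set.pi Set.univ fun _ => Set.Icc (0:ℝ) s)).toReal) ∧
    (∀ u : Fin d → ℝ, (∀ i, u i ∈ Set.Icc (0:ℝ) 1) → s < ⨆ i, u i →
      (∑ k ∈ (Finset.Icc 1 n).filter (fun k => x k ≤ ⨆ i, u i),
          p k / (1 - δ k)) = 1 ∧
      w u = 1 - (μ (Set.pi Set.univ fun _ => Set.Icc (0:ℝ) s)).toReal) ∧
    ∫ u in {u : Fin d → ℝ | s < ⨆ i, u i}, w u ∂μ
      = (μ {u : Fin d → ℝ | s < ⨆ i, u i}).toReal ^ 2 :=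
  rare_event_calibrated_bounded_relative_error_general μ hμcube n x hx1 hxmono δ hδ hδlt s hspos
    kstar hk1 hkn hsx p hp1 hpk w hw
end
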